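/- Let P be a locally finite poset and k a field of characteristic 0. Let ω be a W-valued 2-cochain on P, and let F_ω be the k[[λ]]-bilinear map on the incidence algebra of P over k[[λ]] defined by F_ω(a,b)(i,k') = Σ_{i ≤ j ≤ k'} ω(i,j,k')·a(i,j)·b(j,k'). Then F_ω is associative if and only if ω is a 2-cocycle, i.e., ω(j,k',l)·ω(i,j,l) = ω(i,k',l)·ω(i,j,k') for all chains i ≤ j ≤ k' ≤ l in P. -/

import Mathlib

/-!
Both iterated products `F_ω(F_ω(a,b),c)` and `F_ω(a,F_ω(b,c))` at `(i,l)` are sums over chains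
`i ≤ j ≤ k ≤ l` of `a(i,j)·b(j,k)·c(k,l)`, weighted by `ω(i,k,l)·ω(i,j,k)` and
`ω(j,k,l)·ω(i,j,l)` respectively, so the cocycle identity gives associativity. Conversely,
since `F_ω(E^{ij}, E^{jk}) = ω(i,j,k)·E^{ik}`, associativity on `E^{ij}, E^{jk}, E^{kl}`
compares the two weights of the single chain `i ≤ j ≤ k ≤ l`.
-/

open Finset PowerSeries

/-- The deformed product `F_ω` on the incidence algebra over a commutative ring `R`:
`F_ω(a,b)(i,k') = ∑_{i ≤ j ≤ k'} ω(i,j,k')·a(i,j)·b(j,k')`. -/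
def Fdef {R : Type*} [CommRing R] {P : Type*} [PartialOrder P] [LocallyFiniteOrder P]
    (ω : P → P → P → R) (a b : IncidenceAlgebra R P) : IncidenceAlgebra R P :=
  ⟨fun i l => ∑ j ∈ Finset.Icc i l, ω i j l * a i j * b j l,
   fun i l h => by
    try dsimp only
    rw [Finset.Icc_eq_empty h, Finset.sum_empty]⟩

section DeformedProduct

variable {R : Type*} [CommRing R] {P : Type*} [PartialOrder P] [LocallyFiniteOrder P]

@[simp] lemma Fdef_apply (ω : P → P → P → R) (a b : IncidenceAlgebra R P) (i l : P) :
    Fdef ω a b i l = ∑ j ∈ Icc i l, ω i j l * a i j * b j l := rfl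

lemma Fdef_smul_left (ω : P → P → P → R) (r : R) (a b : IncidenceAlgebra R P) :
    Fdef ω (r • a) b = r • Fdef ω a b :=
  IncidenceAlgebra.ext fun i l _ => by
    simp only [Fdef_apply, IncidenceAlgebra.constSMul_apply, smul_eq_mul, mul_sum]
    exact sum_congr rfl fun _ _ => by ring

lemma Fdef_smul_right (ω : P → P → P → R) (r : R) (a b : IncidenceAlgebra R P) :
    Fdef ω a (r • b) = r • Fdef ω a b :=
  IncidenceAlgebra.ext fun i l _ => by
    simp only [Fdef_apply, IncidenceAlgebra.constSMul_apply, smul_eq_mul, mul_sum]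
    exact sum_congr rfl fun _ _ => by ring

lemma Fdef_Fdef_apply_left (ω : P → P → P → R) (a b c : IncidenceAlgebra R P) (i l : P) :
    Fdef ω (Fdef ω a b) c i l =
      ∑ k ∈ Icc i l, ∑ j ∈ Icc i k, ω i k l * ω i j k * a i j * b j k * c k l := by
  simp only [Fdef_apply, mul_sum, sum_mul]
  exact sum_congr rfl fun _ _ => sum_congr rfl fun _ _ => by ring

lemma Fdef_Fdef_apply_right (ω : P → P → P → R) (a b c : IncidenceAlgebra R P) (i l : P) :
    Fdef ω a (Fdef ω b c) i l =
      ∑ j ∈ Icc i l, ∑ k ∈ Icc j l, ω j k l * ω i j l * a i j * b j k * c k l := by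
  simp only [Fdef_apply, mul_sum]
  exact sum_congr rfl fun _ _ => sum_congr rfl fun _ _ => by ring

lemma Fdef_assoc_of_cocycle (ω : P → P → P → R)
    (hω : ∀ i j k l : P, i ≤ j → j ≤ k → k ≤ l → ω j k l * ω i j l = ω i k l * ω i j k)
    (a b c : IncidenceAlgebra R P) : Fdef ω (Fdef ω a b) c = Fdef ω a (Fdef ω b c) :=
  IncidenceAlgebra.ext fun i l _ => by
    rw [Fdef_Fdef_apply_left, Fdef_Fdef_apply_right,
      sum_comm' (t' := Icc i l) (s' := fun j => Icc j l) fun k j => by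
        simp only [mem_Icc]
        exact ⟨fun h => ⟨⟨h.2.2, h.1.2⟩, h.2.1, h.2.2.trans h.1.2⟩,
          fun h => ⟨⟨h.2.1.trans h.1.1, h.1.2⟩, h.2.1, h.1.1⟩⟩]
    refine sum_congr rfl fun j hj => sum_congr rfl fun k hk => ?_
    rw [mem_Icc] at hj hk
    rw [hω i j k l hj.1 hk.1 hk.2]

end DeformedProduct

section MatrixUnit

variable {R : Type*} {P : Type*} [DecidableEq P]

def IncidenceAlgebra.single [Zero R] [One R] [LE P] (i j : P) (hij : i ≤ j) : IncidenceAlgebra R P :=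
  ⟨fun a b => if a = i ∧ b = j then 1 else 0, fun _ _ hab =>
    if_neg fun ⟨ha, hb⟩ => hab (ha ▸ hb ▸ hij)⟩

@[simp] lemma IncidenceAlgebra.single_apply [Zero R] [One R] [LE P] (i j : P) (hij : i ≤ j) (a b : P) :
    IncidenceAlgebra.single (R := R) i j hij a b = if a = i ∧ b = j then 1 else 0 := rfl

variable [CommRing R] [PartialOrder P] [LocallyFiniteOrder P]

lemma Fdef_single_single (ω : P → P → P → R) {i j k : P} (hij : i ≤ j) (hjk : j ≤ k) :
    Fdef ω (IncidenceAlgebra.single i j hij) (IncidenceAlgebra.single j k hjk) =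
      ω i j k • IncidenceAlgebra.single i k (hij.trans hjk) := by
  refine IncidenceAlgebra.ext fun a b _ => ?_
  rw [Fdef_apply, sum_eq_single j]
  · by_cases ha : a = i <;> by_cases hb : b = k <;> simp [ha, hb]
  · intro x _ hx
    simp [hx]
  · intro hj
    by_cases ha : a = i <;> by_cases hb : b = k <;> simp_all

lemma cocycle_of_Fdef_assoc (ω : P → P → P → R)
    (hassoc : ∀ a b c : IncidenceAlgebra R P, Fdef ω (Fdef ω a b) c = Fdef ω a (Fdef ω b c))
    {i j k l : P} (hij : i ≤ j) (hjk : j ≤ k) (hkl : k ≤ l) :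
    ω j k l * ω i j l = ω i k l * ω i j k := by
  have h := congr($(hassoc (.single i j hij) (.single j k hjk) (.single k l hkl)) i l)
  simp only [Fdef_single_single, Fdef_smul_left, Fdef_smul_right,
    IncidenceAlgebra.constSMul_apply, IncidenceAlgebra.single_apply, and_self, if_true,
    smul_eq_mul, mul_one] at h
  rw [← h, mul_comm]

end MatrixUnit

theorem Fdef_assoc_iff_cocycle_general
    (k : Type*) [Field k]
    (P : Type*) [PartialOrder P] [LocallyFiniteOrder P]
    (ω : P → P → P → PowerSeries k) :
    (∀ a b c : IncidenceAlgebra (PowerSeries k) P,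
        Fdef ω (Fdef ω a b) c = Fdef ω a (Fdef ω b c)) ↔
      (∀ i j k' l : P, i ≤ j → j ≤ k' → k' ≤ l →
        ω j k' l * ω i j l = ω i k' l * ω i j k') := by
  classical
  exact ⟨fun hassoc _ _ _ _ => cocycle_of_Fdef_assoc ω hassoc, Fdef_assoc_of_cocycle ω⟩

theorem Fdef_assoc_iff_cocycle
    (k : Type*) [Field k] [CharZero k]
    (P : Type*) [PartialOrder P] [LocallyFiniteOrder P]
    (ω : P → P → P → PowerSeries k)
    (hω : ∀ i j l : P, i ≤ j → j ≤ l → constantCoeff (ω i j l) = 1) :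
    (∀ a b c : IncidenceAlgebra (PowerSeries k) P,
        Fdef ω (Fdef ω a b) c = Fdef ω a (Fdef ω b c)) ↔
      (∀ i j k' l : P, i ≤ j → j ≤ k' → k' ≤ l →
        ω j k' l * ω i j l = ω i k' l * ω i j k') :=
  Fdef_assoc_iff_cocycle_general k P ω
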